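/- With the setup of the previous ancestor-function lemma (f : ℕ → ℕ with f(n) < n, every fiber of size ≥ 2, μ(n) ≥ μ(f(n))/2, μ(0) = M > 0), the total sum ∑_{n=0}^∞ μ(n) diverges. -/
import Mathlib

/-- Levels of the binary tree: level 0 is `{0}`, and each level is obtained by
taking the two chosen preimages `A m`, `B m` of each node `m`. -/
private def stmt3Levels (A B : ℕ → ℕ) : ℕ → Finset ℕ
  | 0 => {0}
  | k + 1 => (stmt3Levels A B k).biUnion (fun m => {A m, B m})

/-- With the ancestor-function setup (`f n < n`, fibers of size ≥ 2,
`μ n ≥ μ (f n) / 2`, `μ 0 = M > 0`), the total sum `∑ μ n` diverges. -/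
theorem stmt_3 (f : ℕ → ℕ) (μ : ℕ → NNReal) (M : NNReal) (hM : 0 < M)
    (hμ0 : μ 0 = M)
    (hf : ∀ n, 1 ≤ n → f n < n)
    (hfib : ∀ m : ℕ, 2 ≤ Set.encard {n : ℕ | 1 ≤ n ∧ f n = m})
    (hμ : ∀ n, 1 ≤ n → μ (f n) / 2 ≤ μ n) :
    ∑' n : ℕ, (μ n : ENNReal) = ⊤ := by
  classical
  -- choose two distinct preimages of each m
  have hpick : ∀ m : ℕ, ∃ a b : ℕ,
      a ≠ b ∧ (1 ≤ a ∧ f a = m) ∧ (1 ≤ b ∧ f b = m) := by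
    intro m
    have h1 : 1 < Set.encard {n : ℕ | 1 ≤ n ∧ f n = m} :=
      lt_of_lt_of_le (by norm_num) (hfib m)
    obtain ⟨a, b, ha, hb, hab⟩ := Set.one_lt_encard_iff.mp h1
    exact ⟨a, b, hab, ha, hb⟩
  choose A B hABne hA hB using hpick
  set S : ℕ → Finset ℕ := stmt3Levels A B with hS
  have hS0 : S 0 = {0} := rfl
  have hSsucc : ∀ k, S (k + 1) = (S k).biUnion (fun m => {A m, B m}) :=
    fun k => rfl
  -- membership characterization
  have hmem : ∀ k n, n ∈ S k → f^[k] n = 0 ∧ ∀ j < k, 1 ≤ f^[j] n := by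
    intro k
    induction k with
    | zero =>
      intro n hn
      simp only [hS0, Finset.mem_singleton] at hn
      subst hn
      exact ⟨rfl, by omega⟩
    | succ k ih =>
      intro n hn
      rw [hSsucc, Finset.mem_biUnion] at hn
      obtain ⟨m, hm, hnm⟩ := hn
      simp only [Finset.mem_insert, Finset.mem_singleton] at hnm
      have hfn : f n = m ∧ 1 ≤ n := by
        rcases hnm with h | h
        · exact h ▸ ⟨(hA m).2, (hA m).1⟩
        · exact h ▸ ⟨(hB m).2, (hB m).1⟩
      obtain ⟨him, hj⟩ := ih m hm
      constructor
      · rw [Function.iterate_succ_apply, hfn.1, him]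
      · intro j hjk
        cases j with
        | zero => exact hfn.2
        | succ i =>
          rw [Function.iterate_succ_apply, hfn.1]
          exact hj i (by omega)
  -- levels are pairwise disjoint
  have hdisj : ∀ k l, k ≠ l → Disjoint (S k) (S l) := by
    have key : ∀ k l, k < l → Disjoint (S k) (S l) := by
      intro k l hkl
      rw [Finset.disjoint_left]
      intro n hnk hnl
      have h1 := (hmem k n hnk).1
      have h2 := (hmem l n hnl).2 k hkl
      omega
    intro k l hkl
    rcases lt_or_gt_of_ne hkl with h | h
    · exact key k l h
    · exact (key l k h).symm
  -- each level sums to at least M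
  have hlevel : ∀ k, (M : ENNReal) ≤ ∑ n ∈ S k, (μ n : ENNReal) := by
    intro k
    induction k with
    | zero => simp [hS0, hμ0]
    | succ k ih =>
      rw [hSsucc]
      have hpd : ∀ m₁ ∈ S k, ∀ m₂ ∈ S k, m₁ ≠ m₂ →
          Disjoint ({A m₁, B m₁} : Finset ℕ) {A m₂, B m₂} := by
        intro m₁ _ m₂ _ hne
        rw [Finset.disjoint_left]
        intro n hn1 hn2
        simp only [Finset.mem_insert, Finset.mem_singleton] at hn1 hn2
        apply hne
        have e1 : f n = m₁ := by
          rcases hn1 with h | h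
          · exact h ▸ (hA m₁).2
          · exact h ▸ (hB m₁).2
        have e2 : f n = m₂ := by
          rcases hn2 with h | h
          · exact h ▸ (hA m₂).2
          · exact h ▸ (hB m₂).2
        rw [← e1, e2]
      rw [Finset.sum_biUnion hpd]
      refine le_trans ih (Finset.sum_le_sum ?_)
      intro m _
      rw [Finset.sum_pair (hABne m)]
      have hAm : (μ m : ENNReal) / 2 ≤ μ (A m) := by
        have := hμ (A m) (hA m).1
        rw [(hA m).2] at this
        calc (μ m : ENNReal) / 2 = ((μ m / 2 : NNReal) : ENNReal) := by
              rw [ENNReal.coe_div (by norm_num)]; rfl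
          _ ≤ _ := ENNReal.coe_le_coe.mpr this
      have hBm : (μ m : ENNReal) / 2 ≤ μ (B m) := by
        have := hμ (B m) (hB m).1
        rw [(hB m).2] at this
        calc (μ m : ENNReal) / 2 = ((μ m / 2 : NNReal) : ENNReal) := by
              rw [ENNReal.coe_div (by norm_num)]; rfl
          _ ≤ _ := ENNReal.coe_le_coe.mpr this
      calc (μ m : ENNReal) = μ m / 2 + μ m / 2 := (ENNReal.add_halves _).symm
        _ ≤ μ (A m) + μ (B m) := add_le_add hAm hBm
  -- the sum exceeds K * M for each K
  have hKM : ∀ K : ℕ, (K : ENNReal) * M ≤ ∑' n : ℕ, (μ n : ENNReal) := by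
    intro K
    have hd : ∀ k₁ ∈ Finset.range K, ∀ k₂ ∈ Finset.range K, k₁ ≠ k₂ →
        Disjoint (S k₁) (S k₂) := fun k₁ _ k₂ _ h => hdisj k₁ k₂ h
    calc (K : ENNReal) * M = ∑ _k ∈ Finset.range K, (M : ENNReal) := by
          simp [mul_comm]
      _ ≤ ∑ k ∈ Finset.range K, ∑ n ∈ S k, (μ n : ENNReal) :=
          Finset.sum_le_sum (fun k _ => hlevel k)
      _ = ∑ n ∈ (Finset.range K).biUnion S, (μ n : ENNReal) :=
          (Finset.sum_biUnion hd).symm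
      _ ≤ ∑' n : ℕ, (μ n : ENNReal) := ENNReal.sum_le_tsum _
  -- conclude
  refine ENNReal.eq_top_of_forall_nnreal_le (fun r => ?_)
  obtain ⟨K, hK⟩ := exists_nat_ge (r / M)
  have : r ≤ (K : NNReal) * M := by
    calc r = r / M * M := by rw [div_mul_cancel₀ _ hM.ne']
      _ ≤ (K : NNReal) * M := mul_le_mul_left hK _
  calc (r : ENNReal) ≤ ((K : NNReal) * M : NNReal) := ENNReal.coe_le_coe.mpr this
    _ = (K : ENNReal) * M := by push_cast; ring
    _ ≤ _ := hKM K
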